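/- For every natural number m, the polynomial p_m(x) = Σ_{k=0}^{m} (−1)^{k+1}·C(2k, k)·(x² − 1)^k / (4^k·(2k − 1)) is the unique polynomial of degree at most 2m + 1 whose derivatives of orders 0 through m at x = 1 agree with those of the function x ↦ x, and whose derivatives of orders 0 through m at x = −1 agree with those of the function x ↦ −x; that is, p_m is the two-point Hermite interpolant of the absolute value function at the nodes ±1 matching m derivatives. -/

import Mathlib

/-- The polynomial `p_m = ∑_{k=0}^{m} (-1)^{k+1}·C(2k,k)·(X²-1)^k/(4^k·(2k-1)) ∈ ℝ[X]`. -/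
noncomputable def hermiteAbsPoly (m : ℕ) : Polynomial ℝ :=
  ∑ k ∈ Finset.range (m + 1),
    Polynomial.C ((-1 : ℝ) ^ (k + 1) * (Nat.centralBinom k : ℝ) /
        ((4 : ℝ) ^ k * (2 * (k : ℝ) - 1))) *
      (Polynomial.X ^ 2 - 1) ^ k

open Polynomial Finset

namespace HermiteAbsAux

noncomputable def c (k : ℕ) : ℝ :=
  (-1 : ℝ) ^ (k + 1) * (Nat.centralBinom k : ℝ) / ((4 : ℝ) ^ k * (2 * (k : ℝ) - 1))

lemma c_zero : c 0 = 1 := by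
  simp [c, Nat.centralBinom_zero]

lemma centralBinom_real (k : ℕ) :
    (Nat.centralBinom (k + 1) : ℝ) = 2 * (2 * (k : ℝ) + 1) * (catalan k : ℝ) := by
  have h1 : ((k : ℝ) + 1) * (Nat.centralBinom (k + 1) : ℝ)
      = 2 * (2 * (k : ℝ) + 1) * (Nat.centralBinom k : ℝ) := by
    exact_mod_cast congrArg (Nat.cast : ℕ → ℝ) (Nat.succ_mul_centralBinom_succ k)
  have h2 : ((k : ℝ) + 1) * (catalan k : ℝ) = (Nat.centralBinom k : ℝ) := by
    exact_mod_cast congrArg (Nat.cast : ℕ → ℝ) (succ_mul_catalan_eq_centralBinom k)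
  have hk : ((k : ℝ) + 1) ≠ 0 := by positivity
  apply mul_left_cancel₀ hk
  rw [h1, ← h2]; ring

lemma c_succ (k : ℕ) : c (k + 1) = (-1 : ℝ) ^ k * (2 * (catalan k : ℝ)) / 4 ^ (k + 1) := by
  have h : (2 * (k : ℝ) + 1) ≠ 0 := by positivity
  have h4 : ((4 : ℝ) ^ (k + 1)) ≠ 0 := by positivity
  rw [c, centralBinom_real]
  push_cast
  rw [show 2 * ((k : ℝ) + 1) - 1 = 2 * (k : ℝ) + 1 by ring]
  rw [show ((-1 : ℝ)) ^ (k + 1 + 1) = (-1) ^ k by rw [pow_succ, pow_succ]; ring]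
  field_simp

lemma conv_c (n : ℕ) :
    ∑ i ∈ range (n + 1), c i * c (n - i) = if n ≤ 1 then 1 else 0 := by
  match n with
  | 0 => simp [c_zero]
  | 1 => norm_num [Finset.sum_range_succ, c_zero, c_succ]
  | (n + 2) =>
    rw [if_neg (by omega)]
    rw [Finset.sum_range_succ', Finset.sum_range_succ]
    have hmid : ∀ i ∈ range (n + 1),
        c (i + 1) * c (n + 2 - (i + 1)) =
          (-1 : ℝ) ^ n * 4 / 4 ^ (n + 2) * ((catalan i : ℝ) * (catalan (n - i) : ℝ)) := by
      intro i hi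
      rw [mem_range] at hi
      rw [show n + 2 - (i + 1) = (n - i) + 1 by omega, c_succ, c_succ, div_mul_div_comm]
      rw [show (-1 : ℝ) ^ i * (2 * (catalan i : ℝ)) * ((-1) ^ (n - i) * (2 * (catalan (n - i) : ℝ)))
            = ((-1 : ℝ) ^ i * (-1) ^ (n - i)) * (4 * ((catalan i : ℝ) * (catalan (n - i) : ℝ))) by
          ring]
      rw [← pow_add, show i + (n - i) = n by omega, ← pow_add,
        show i + 1 + (n - i + 1) = n + 2 by omega]
      ring
    rw [Finset.sum_congr rfl hmid, ← Finset.mul_sum]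
    have hcat : ∑ i ∈ range (n + 1), (catalan i : ℝ) * (catalan (n - i) : ℝ)
        = (catalan (n + 1) : ℝ) := by
      rw [catalan_succ, ← Finset.sum_range fun i => catalan i * catalan (n - i)]
      push_cast
      rfl
    rw [hcat, show n + 2 - 0 = (n + 1) + 1 by omega,
      show n + 2 - (n + 2) = 0 by omega, c_zero, c_succ]
    rw [show (-1 : ℝ) ^ (n + 1) = -(-1) ^ n by rw [pow_succ]; ring]
    ring

noncomputable def P (m : ℕ) : Polynomial ℝ := ∑ k ∈ range (m + 1), C (c k) * X ^ k

lemma coeff_P (m n : ℕ) (h : n ≤ m) : (P m).coeff n = c n := by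
  rw [P, finset_sum_coeff]
  simp only [coeff_C_mul, coeff_X_pow, mul_ite, mul_one, mul_zero]
  rw [Finset.sum_ite_eq (range (m + 1)) n c]
  simp [Nat.lt_succ_iff, h]

lemma key (m : ℕ) : (X : Polynomial ℝ) ^ (m + 1) ∣ (P m) ^ 2 - (1 + X) := by
  rw [X_pow_dvd_iff]
  intro d hd
  have hdm : d ≤ m := Nat.lt_succ_iff.mp hd
  rw [coeff_sub, sq, coeff_mul, Finset.Nat.sum_antidiagonal_eq_sum_range_succ_mk]
  have hc : ∀ i ∈ range (d + 1), (P m).coeff i * (P m).coeff (d - i) = c i * c (d - i) := by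
    intro i hi
    rw [mem_range] at hi
    rw [coeff_P m i (by omega), coeff_P m (d - i) (by omega)]
  rw [Finset.sum_congr rfl hc, conv_c]
  rcases d with _ | _ | d <;> simp [coeff_one, coeff_X]

lemma hp_eq (m : ℕ) : hermiteAbsPoly m = (P m).comp (X ^ 2 - 1) := by
  rw [hermiteAbsPoly, P, Polynomial.sum_comp]
  simp only [mul_comp, C_comp, pow_comp, X_comp]
  rfl

lemma key2 (m : ℕ) :
    ((X : Polynomial ℝ) ^ 2 - 1) ^ (m + 1) ∣ (hermiteAbsPoly m) ^ 2 - X ^ 2 := by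
  obtain ⟨r, hr⟩ := key m
  refine ⟨r.comp (X ^ 2 - 1), ?_⟩
  have h := congrArg (fun p : Polynomial ℝ => p.comp (X ^ 2 - 1)) hr
  simpa [sub_comp, pow_comp, mul_comp, X_comp, one_comp, add_comp, hp_eq,
    add_sub_cancel] using h

lemma hp_eval_one (m : ℕ) : (hermiteAbsPoly m).eval 1 = 1 := by
  rw [hp_eq, eval_comp]
  norm_num
  rw [← coeff_zero_eq_eval_zero, coeff_P m 0 (Nat.zero_le m), c_zero]

lemma hp_eval_neg_one (m : ℕ) : (hermiteAbsPoly m).eval (-1) = 1 := by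
  rw [hp_eq, eval_comp]
  norm_num
  rw [← coeff_zero_eq_eval_zero, coeff_P m 0 (Nat.zero_le m), c_zero]

lemma hfac : ((X : Polynomial ℝ) ^ 2 - 1) = (X - C 1) * (X - C (-1)) := by
  rw [map_one, map_neg, map_one]
  ring

lemma dvd_one_side (m : ℕ) : (X - C (1 : ℝ)) ^ (m + 1) ∣ hermiteAbsPoly m - X := by
  have h := key2 m
  rw [hfac, mul_pow, show (hermiteAbsPoly m) ^ 2 - X ^ 2
      = (hermiteAbsPoly m - X) * (hermiteAbsPoly m + X) by ring] at h
  refine (prime_X_sub_C (1 : ℝ)).pow_dvd_of_dvd_mul_right _ ?_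
    ((dvd_mul_right _ _).trans h)
  rw [dvd_iff_isRoot]
  simp [IsRoot, hp_eval_one]

lemma dvd_neg_side (m : ℕ) : (X - C (-1 : ℝ)) ^ (m + 1) ∣ hermiteAbsPoly m + X := by
  have h := key2 m
  rw [hfac, mul_pow, show (hermiteAbsPoly m) ^ 2 - X ^ 2
      = (hermiteAbsPoly m + X) * (hermiteAbsPoly m - X) by ring] at h
  refine (prime_X_sub_C (-1 : ℝ)).pow_dvd_of_dvd_mul_right _ ?_
    ((dvd_mul_left _ _).trans h)
  rw [dvd_iff_isRoot]
  simp [IsRoot, hp_eval_neg_one]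

lemma satisfies (m l : ℕ) (hl : l ≤ m) :
    (derivative^[l] (hermiteAbsPoly m)).eval 1 = (derivative^[l] (X : Polynomial ℝ)).eval 1 ∧
    (derivative^[l] (hermiteAbsPoly m)).eval (-1) =
      (derivative^[l] (-X : Polynomial ℝ)).eval (-1) := by
  constructor
  · have h := pow_sub_dvd_iterate_derivative_of_pow_dvd l (dvd_one_side m)
    have h1 : (X - C (1 : ℝ)) ∣ derivative^[l] (hermiteAbsPoly m - X) :=
      (dvd_pow_self _ (by omega : m + 1 - l ≠ 0)).trans h
    have h2 := dvd_iff_isRoot.mp h1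
    rw [iterate_derivative_sub] at h2
    simpa [IsRoot, eval_sub, sub_eq_zero] using h2
  · have h := pow_sub_dvd_iterate_derivative_of_pow_dvd l (dvd_neg_side m)
    have h1 : (X - C (-1 : ℝ)) ∣ derivative^[l] (hermiteAbsPoly m + X) :=
      (dvd_pow_self _ (by omega : m + 1 - l ≠ 0)).trans h
    have h2 := dvd_iff_isRoot.mp h1
    rw [show hermiteAbsPoly m + X = hermiteAbsPoly m - (-X) by ring,
      iterate_derivative_sub] at h2
    rw [iterate_derivative_neg] at h2 ⊢
    simp only [IsRoot, eval_add, eval_sub, eval_neg, sub_neg_eq_add] at h2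
    simp only [eval_neg]
    linarith

lemma deg_hp (m : ℕ) : (hermiteAbsPoly m).degree ≤ (2 * m + 1 : ℕ) := by
  rw [hermiteAbsPoly]
  refine (degree_sum_le _ _).trans (Finset.sup_le fun k hk => ?_)
  rw [mem_range, Nat.lt_succ_iff] at hk
  refine (degree_mul_le _ _).trans ?_
  have h2 : (((X : Polynomial ℝ) ^ 2 - 1) ^ k).degree ≤ ((2 * k : ℕ) : WithBot ℕ) := by
    refine degree_le_natDegree.trans ?_
    have hnd : (((X : Polynomial ℝ) ^ 2 - 1) ^ k).natDegree ≤ 2 * k := by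
      refine natDegree_pow_le.trans ?_
      have : ((X : Polynomial ℝ) ^ 2 - 1).natDegree ≤ 2 :=
        (natDegree_sub_le _ _).trans (by simp)
      calc k * ((X : Polynomial ℝ) ^ 2 - 1).natDegree ≤ k * 2 := Nat.mul_le_mul le_rfl this
        _ = 2 * k := Nat.mul_comm k 2
    exact_mod_cast hnd
  calc degree (C _) + degree (((X : Polynomial ℝ) ^ 2 - 1) ^ k) ≤ 0 + ((2 * k : ℕ) : WithBot ℕ) :=
        add_le_add degree_C_le h2
    _ ≤ ((2 * m + 1 : ℕ) : WithBot ℕ) := by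
        rw [zero_add]
        exact_mod_cast (show 2 * k ≤ 2 * m + 1 by omega)

end HermiteAbsAux

/-- `p_m` is the unique polynomial of degree at most `2m+1` whose derivatives of orders
`0` through `m` at `x = 1` agree with those of `x ↦ x` and whose derivatives of orders
`0` through `m` at `x = -1` agree with those of `x ↦ -x`; i.e. `p_m` is the two-point
Hermite interpolant of the absolute value function at the nodes `±1` matching `m`
derivatives. -/
theorem hermiteAbsPoly_unique_hermite_interpolant (m : ℕ) (q : Polynomial ℝ) :
    (q.degree ≤ (2 * m + 1 : ℕ) ∧
      ∀ l : ℕ, l ≤ m →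
        (Polynomial.derivative^[l] q).eval 1 =
          (Polynomial.derivative^[l] (Polynomial.X : Polynomial ℝ)).eval 1 ∧
        (Polynomial.derivative^[l] q).eval (-1) =
          (Polynomial.derivative^[l] (-Polynomial.X : Polynomial ℝ)).eval (-1)) ↔
      q = hermiteAbsPoly m := by
  open Polynomial HermiteAbsAux in
  constructor
  · rintro ⟨hdeg, hcond⟩
    have hzero : q - hermiteAbsPoly m = 0 := by
      by_contra hd0
      have hroots1 : ∀ l ≤ m, (derivative^[l] (q - hermiteAbsPoly m)).IsRoot 1 := by
        intro l hl
        rw [iterate_derivative_sub]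
        simp only [IsRoot, eval_sub]
        rw [(hcond l hl).1, (satisfies m l hl).1]
        ring
      have hroots2 : ∀ l ≤ m, (derivative^[l] (q - hermiteAbsPoly m)).IsRoot (-1) := by
        intro l hl
        rw [iterate_derivative_sub]
        simp only [IsRoot, eval_sub]
        rw [(hcond l hl).2, (satisfies m l hl).2]
        ring
      have hnzd : ∀ k ≤ m, k ≠ 0 → ((k : ℝ)) ∈ nonZeroDivisors ℝ := fun k _ hk =>
        mem_nonZeroDivisors_of_ne_zero (Nat.cast_ne_zero.mpr hk)
      have m1 : m < (q - hermiteAbsPoly m).rootMultiplicity 1 :=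
        lt_rootMultiplicity_of_isRoot_iterate_derivative_of_mem_nonZeroDivisors'
          hd0 hroots1 hnzd
      have m2 : m < (q - hermiteAbsPoly m).rootMultiplicity (-1) :=
        lt_rootMultiplicity_of_isRoot_iterate_derivative_of_mem_nonZeroDivisors'
          hd0 hroots2 hnzd
      have d1 : (X - C (1 : ℝ)) ^ (m + 1) ∣ q - hermiteAbsPoly m :=
        (le_rootMultiplicity_iff hd0).mp m1
      have d2 : (X - C (-1 : ℝ)) ^ (m + 1) ∣ q - hermiteAbsPoly m :=
        (le_rootMultiplicity_iff hd0).mp m2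
      have hcop : IsCoprime ((X - C (1 : ℝ)) ^ (m + 1)) ((X - C (-1 : ℝ)) ^ (m + 1)) := by
        refine IsCoprime.pow ?_
        exact isCoprime_X_sub_C_of_isUnit_sub (by norm_num)
      have hdvd := hcop.mul_dvd d1 d2
      have hg : ((X - C (1 : ℝ)) ^ (m + 1) * (X - C (-1 : ℝ)) ^ (m + 1)).degree
          = ((2 * m + 2 : ℕ) : WithBot ℕ) := by
        have hmon : ((X - C (1 : ℝ)) ^ (m + 1) * (X - C (-1 : ℝ)) ^ (m + 1)).Monic :=
          ((monic_X_sub_C _).pow _).mul ((monic_X_sub_C _).pow _)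
        rw [degree_eq_natDegree hmon.ne_zero,
          natDegree_mul (pow_ne_zero _ (X_sub_C_ne_zero _)) (pow_ne_zero _ (X_sub_C_ne_zero _)),
          natDegree_pow, natDegree_pow, natDegree_X_sub_C, natDegree_X_sub_C]
        rw [Nat.cast_inj]
        omega
      have hlt : (q - hermiteAbsPoly m).degree
          < ((X - C (1 : ℝ)) ^ (m + 1) * (X - C (-1 : ℝ)) ^ (m + 1)).degree := by
        rw [hg]
        refine lt_of_le_of_lt ((degree_sub_le _ _).trans (max_le hdeg (deg_hp m))) ?_
        exact_mod_cast (show 2 * m + 1 < 2 * m + 2 by omega)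
      exact hd0 (eq_zero_of_dvd_of_degree_lt hdvd hlt)
    exact sub_eq_zero.mp hzero
  · rintro rfl
    exact ⟨deg_hp m, fun l hl => satisfies m l hl⟩
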